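/- arXiv:1109.3843 — 2 statements merged into one kernel-verified Lean document; each statement's English description precedes it below -/
import Mathlib

section
/- If ‖I_d − UᵀΠ₁ᵀΠ₁U‖₂ ≤ ε with 0 < ε ≤ 1/2 and Π₁U has rank d, then for the vectors û_i = e_iᵀA(Π₁A)⁺ one has |⟨U_{(i)}, U_{(j)}⟩ − ⟨û_i, û_j⟩| ≤ (ε/(1−ε)) ‖U_{(i)}‖₂ ‖U_{(j)}‖₂ for all i, j. -/
/-!
Write `A = U W` with `W = S Vᵀ` invertible and `B = Π₁ U`. The normal equations
`(Π₁A)ᵀ (Π₁A) (Π₁A)⁺ = (Π₁A)ᵀ`, valid for every Moore–Penrose inverse, give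
`W (Π₁A)⁺ = (BᵀB)⁻¹ Bᵀ`, so the rows `û_i` of `A (Π₁A)⁺` have Gram matrix `U (BᵀB)⁻¹ Uᵀ`
and the errors form the matrix `U (I - (BᵀB)⁻¹) Uᵀ`. From `‖I - BᵀB‖ ≤ ε < 1` one gets
`‖I - (BᵀB)⁻¹‖ ≤ ε / (1 - ε)`, and Cauchy–Schwarz bounds each entry.
-/

open Matrix

open scoped Matrix.Norms.L2Operator

def IsMoorePenrose {m n : ℕ} (A : Matrix (Fin m) (Fin n) ℝ) (Ap : Matrix (Fin n) (Fin m) ℝ) : Prop :=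
  A * Ap * A = A ∧ Ap * A * Ap = Ap ∧ (A * Ap)ᵀ = A * Ap ∧ (Ap * A)ᵀ = Ap * A

theorem norm_one_sub_inverse_le {R : Type*} [NormedRing R] {a : R} (ha : IsUnit a) {ε : ℝ}
    (h : ‖1 - a‖ ≤ ε) (hε : ε < 1) : ‖1 - Ring.inverse a‖ ≤ ε / (1 - ε) := by
  set N := 1 - Ring.inverse a
  have hN : N = -(1 - a) + (1 - a) * N := by
    simp only [N, mul_sub, mul_one, sub_mul, one_mul, Ring.mul_inverse_cancel a ha]
    abel
  have hbound : ‖N‖ ≤ ε + ε * ‖N‖ :=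
    calc ‖N‖ = ‖-(1 - a) + (1 - a) * N‖ := congrArg norm hN
      _ ≤ ‖1 - a‖ + ‖1 - a‖ * ‖N‖ := by grw [norm_add_le, norm_neg, norm_mul_le]
      _ ≤ ε + ε * ‖N‖ := by gcongr
  rw [le_div_iff₀ (by linarith)]
  linarith

namespace IsMoorePenrose

variable {m n : ℕ} {C : Matrix (Fin m) (Fin n) ℝ} {X : Matrix (Fin n) (Fin m) ℝ}

theorem transpose_mul_mul_eq (hX : IsMoorePenrose C X) : Cᵀ * C * X = Cᵀ :=
  calc Cᵀ * C * X = Cᵀ * (C * X)ᵀ := by rw [hX.2.2.1, Matrix.mul_assoc]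
    _ = (C * X * C)ᵀ := by rw [transpose_mul _ C]
    _ = Cᵀ := by rw [hX.1]

theorem mul_eq_inv_gram_mul_transpose {B : Matrix (Fin m) (Fin n) ℝ}
    {W : Matrix (Fin n) (Fin n) ℝ} (hW : IsUnit W) (hB : IsUnit (Bᵀ * B))
    (hX : IsMoorePenrose (B * W) X) : W * X = (Bᵀ * B)⁻¹ * Bᵀ := by
  have hWt : IsUnit Wᵀ.det := by rwa [det_transpose, ← isUnit_iff_isUnit_det]
  have h : Wᵀ * (Bᵀ * B * (W * X)) = Wᵀ * Bᵀ := by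
    simpa only [transpose_mul, Matrix.mul_assoc] using hX.transpose_mul_mul_eq
  have h' : Bᵀ * B * (W * X) = Bᵀ := by
    simpa only [nonsing_inv_mul_cancel_left _ _ hWt] using congrArg (Wᵀ⁻¹ * ·) h
  calc W * X = (Bᵀ * B)⁻¹ * (Bᵀ * B * (W * X)) :=
        (nonsing_inv_mul_cancel_left _ _ ((isUnit_iff_isUnit_det _).mp hB)).symm
    _ = (Bᵀ * B)⁻¹ * Bᵀ := by rw [h']

theorem mul_mul_transpose_eq_inv_gram {B : Matrix (Fin m) (Fin n) ℝ}
    {W : Matrix (Fin n) (Fin n) ℝ} (hW : IsUnit W) (hB : IsUnit (Bᵀ * B))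
    (hX : IsMoorePenrose (B * W) X) : W * X * (W * X)ᵀ = (Bᵀ * B)⁻¹ := by
  have hsymm : (Bᵀ * B)ᵀ = Bᵀ * B := by rw [transpose_mul, transpose_transpose]
  rw [hX.mul_eq_inv_gram_mul_transpose hW hB, transpose_mul, transpose_nonsing_inv, hsymm,
    transpose_transpose, Matrix.mul_assoc, ← Matrix.mul_assoc Bᵀ,
    mul_nonsing_inv _ ((isUnit_iff_isUnit_det _).mp hB), Matrix.mul_one]

end IsMoorePenrose

theorem EuclideanSpace.norm_toLp_eq_sqrt {m : Type*} [Fintype m] (x : m → ℝ) :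
    ‖(WithLp.toLp 2 x : EuclideanSpace ℝ m)‖ = Real.sqrt (∑ k, x k ^ 2) := by
  simp [EuclideanSpace.norm_eq, Real.norm_eq_abs, sq_abs]

theorem abs_dotProduct_mulVec_le {m n : Type*} [Fintype m] [Fintype n] [DecidableEq n]
    (N : Matrix m n ℝ) (x : m → ℝ) (y : n → ℝ) :
    |x ⬝ᵥ (N *ᵥ y)| ≤
      ‖N‖ * ‖(WithLp.toLp 2 x : EuclideanSpace ℝ m)‖ * ‖(WithLp.toLp 2 y : EuclideanSpace ℝ n)‖ :=
  calc |x ⬝ᵥ (N *ᵥ y)| = |inner ℝ (WithLp.toLp 2 x) (WithLp.toLp 2 (N *ᵥ y))| := by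
        rw [EuclideanSpace.inner_toLp_toLp, dotProduct_comm]; rfl
    _ ≤ ‖(WithLp.toLp 2 x : EuclideanSpace ℝ m)‖ *
          ‖(WithLp.toLp 2 (N *ᵥ y) : EuclideanSpace ℝ m)‖ := abs_real_inner_le_norm _ _
    _ ≤ ‖(WithLp.toLp 2 x : EuclideanSpace ℝ m)‖ *
          (‖N‖ * ‖(WithLp.toLp 2 y : EuclideanSpace ℝ n)‖) := by
        gcongr; exact l2_opNorm_mulVec N (WithLp.toLp 2 y)
    _ = _ := by ring

theorem abs_dotProduct_sub_dotProduct_le {m n l : Type*} [Fintype n] [Fintype l]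
    [DecidableEq n] {U : Matrix m n ℝ} {P : Matrix m l ℝ} {G : Matrix n n ℝ}
    (hP : P * Pᵀ = U * G * Uᵀ) (i j : m) :
    |U i ⬝ᵥ U j - P i ⬝ᵥ P j| ≤ ‖1 - G‖ * ‖(WithLp.toLp 2 (U i) : EuclideanSpace ℝ n)‖ *
      ‖(WithLp.toLp 2 (U j) : EuclideanSpace ℝ n)‖ := by
  have hdiff : U i ⬝ᵥ U j - P i ⬝ᵥ P j = U i ⬝ᵥ ((1 - G) *ᵥ U j) :=
    calc U i ⬝ᵥ U j - P i ⬝ᵥ P j = (U * Uᵀ - P * Pᵀ) i j := rfl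
      _ = (U * ((1 - G) * Uᵀ) : Matrix m m ℝ) i j := by
          rw [hP, Matrix.sub_mul, Matrix.mul_sub, Matrix.one_mul, Matrix.mul_assoc]
      _ = U i ⬝ᵥ ((1 - G) *ᵥ U j) := by rw [mul_apply']; rfl
  rw [hdiff]
  exact abs_dotProduct_mulVec_le _ _ _

theorem sketched_inner_products_additive_error_general {n d r : ℕ}
    (A U : Matrix (Fin n) (Fin d) ℝ) (S V : Matrix (Fin d) (Fin d) ℝ)
    (Pi : Matrix (Fin r) (Fin n) ℝ) (Ap : Matrix (Fin d) (Fin r) ℝ)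
    (ε : ℝ) (hε1 : ε ≤ 1 / 2)
    (hSVD : A = U * S * Vᵀ)
    (hV : Vᵀ * V = 1) (hS : Invertible S)
    (h : ‖(1 : Matrix (Fin d) (Fin d) ℝ) - Uᵀ * Piᵀ * Pi * U‖ ≤ ε)
    (hAp : IsMoorePenrose (Pi * A) Ap) :
    ∀ i j : Fin n,
      |(∑ k, U i k * U j k) - ∑ k, (A * Ap) i k * (A * Ap) j k| ≤
        (ε / (1 - ε)) * Real.sqrt (∑ k, (U i k) ^ 2) * Real.sqrt (∑ k, (U j k) ^ 2) := by
  intro i j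
  set B := Pi * U
  have hε : ε < 1 := by linarith
  have hB : ‖1 - Bᵀ * B‖ ≤ ε := by simpa only [B, transpose_mul, Matrix.mul_assoc] using h
  have hBunit : IsUnit (Bᵀ * B) := by
    simpa using isUnit_one_sub_of_norm_lt_one (hB.trans_lt hε)
  have hW : IsUnit (S * Vᵀ) :=
    (isUnit_of_invertible S).mul ((isUnit_iff_isUnit_det _).mpr (isUnit_det_of_right_inverse hV))
  have hPiA : Pi * A = B * (S * Vᵀ) := by rw [hSVD]; simp only [B, Matrix.mul_assoc]
  have hAAp : A * Ap = U * (S * Vᵀ * Ap) := by rw [hSVD]; simp only [Matrix.mul_assoc]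
  have hGram : A * Ap * (A * Ap)ᵀ = U * (Bᵀ * B)⁻¹ * Uᵀ := by
    rw [hPiA] at hAp
    rw [hAAp, transpose_mul, Matrix.mul_assoc, ← Matrix.mul_assoc (S * Vᵀ * Ap),
      hAp.mul_mul_transpose_eq_inv_gram hW hBunit, Matrix.mul_assoc]
  calc |U i ⬝ᵥ U j - (A * Ap) i ⬝ᵥ (A * Ap) j|
      ≤ ‖1 - (Bᵀ * B)⁻¹‖ * ‖(WithLp.toLp 2 (U i) : EuclideanSpace ℝ (Fin d))‖ *
          ‖(WithLp.toLp 2 (U j) : EuclideanSpace ℝ (Fin d))‖ :=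
        abs_dotProduct_sub_dotProduct_le hGram i j
    _ ≤ ε / (1 - ε) * Real.sqrt (∑ k, (U i k) ^ 2) * Real.sqrt (∑ k, (U j k) ^ 2) := by
        rw [nonsing_inv_eq_ringInverse, EuclideanSpace.norm_toLp_eq_sqrt,
          EuclideanSpace.norm_toLp_eq_sqrt]
        gcongr
        exact norm_one_sub_inverse_le hBunit hB hε

theorem sketched_inner_products_additive_error {n d r : ℕ}
    (A U : Matrix (Fin n) (Fin d) ℝ) (S V : Matrix (Fin d) (Fin d) ℝ)
    (Pi : Matrix (Fin r) (Fin n) ℝ) (Ap : Matrix (Fin d) (Fin r) ℝ)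
    (ε : ℝ) (hε0 : 0 < ε) (hε1 : ε ≤ 1 / 2)
    (hrank : A.rank = d)
    (hSVD : A = U * S * Vᵀ) (hU : Uᵀ * U = 1)
    (hV : Vᵀ * V = 1) (hV' : V * Vᵀ = 1) (hS : Invertible S)
    (h : ‖(1 : Matrix (Fin d) (Fin d) ℝ) - Uᵀ * Piᵀ * Pi * U‖ ≤ ε)
    (hrankPiU : (Pi * U).rank = d)
    (hAp : IsMoorePenrose (Pi * A) Ap) :
    ∀ i j : Fin n,
      |(∑ k, U i k * U j k) - ∑ k, (A * Ap) i k * (A * Ap) j k| ≤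
        (ε / (1 - ε)) * Real.sqrt (∑ k, (U i k) ^ 2) * Real.sqrt (∑ k, (U j k) ^ 2) :=
  sketched_inner_products_additive_error_general A U S V Pi Ap ε hε1 hSVD hV hS h hAp
end

section
/- Under-constrained least squares via column sampling: let A ∈ ℝ^{n×d} with n ≤ d and rank(A) = n, thin SVD A = UΣVᵀ, and S ∈ ℝ^{d×r} a sampling matrix such that ‖I_n − VᵀSSᵀV‖₂ ≤ ε ≤ 1/2. Then for any b ∈ ℝⁿ, setting x_opt = A⁺b and x̃_opt = Aᵀ(AS)⁺ᵀ(AS)⁺b, we have ‖x_opt − x̃_opt‖₂ ≤ 2ε‖x_opt‖₂. -/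
/-!
Put `W = Vᵀ M` and `G = W Wᵀ`. The hypothesis says `‖1 - G‖ ≤ ε ≤ 1/2`, so `G` is invertible and
`‖1 - G⁻¹‖ ≤ ε / (1 - ε) ≤ 2ε`. Both pseudoinverses are explicit, since a right inverse `X` of a
matrix `B` with `X B` symmetric is `B⁺`: `A⁺ = V S⁻¹ Uᵀ` and `(AM)⁺ = Wᵀ G⁻¹ S⁻¹ Uᵀ`. Hence
`Aᵀ (AM)⁺ᵀ (AM)⁺ = V G⁻¹ S⁻¹ Uᵀ`, so with `y = S⁻¹ Uᵀ b` we get `x_opt = V y` and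
`x_opt - x̃_opt = V (1 - G⁻¹) y`; as `V` is an isometry the bound follows.
-/

open Matrix

open scoped Matrix.Norms.L2Operator

theorem IsMoorePenrose.unique {m n : ℕ} {A : Matrix (Fin m) (Fin n) ℝ}
    {X Y : Matrix (Fin n) (Fin m) ℝ} (hX : IsMoorePenrose A X) (hY : IsMoorePenrose A Y) :
    X = Y := by
  obtain ⟨hX1, hX2, hX3, hX4⟩ := hX
  obtain ⟨hY1, hY2, hY3, hY4⟩ := hY
  have hAX : A * X = A * Y :=
    calc A * X = (A * Y * A) * X := by rw [hY1]
    _ = (A * Y)ᵀ * (A * X)ᵀ := by rw [hY3, hX3, Matrix.mul_assoc]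
    _ = (A * X * A * Y)ᵀ := by simp only [Matrix.transpose_mul, Matrix.mul_assoc]
    _ = A * Y := by rw [hX1, hY3]
  have hXA : X * A = Y * A :=
    calc X * A = X * (A * Y * A) := by rw [hY1]
    _ = (X * A)ᵀ * (Y * A)ᵀ := by rw [hX4, hY4]; simp only [Matrix.mul_assoc]
    _ = (Y * (A * X * A))ᵀ := by simp only [Matrix.transpose_mul, Matrix.mul_assoc]
    _ = Y * A := by rw [hX1, hY4]
  calc X = X * A * X := hX2.symm
  _ = Y * A * Y := by rw [Matrix.mul_assoc, hAX, ← Matrix.mul_assoc, hXA]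
  _ = Y := hY2

theorem IsMoorePenrose.of_mul_eq_one {m n : ℕ} {A : Matrix (Fin m) (Fin n) ℝ}
    {X : Matrix (Fin n) (Fin m) ℝ} (hAX : A * X = 1) (hXA : (X * A)ᵀ = X * A) :
    IsMoorePenrose A X :=
  ⟨by rw [hAX, Matrix.one_mul], by rw [Matrix.mul_assoc, hAX, Matrix.mul_one],
    by rw [hAX, transpose_one], hXA⟩

section SVD

variable {m k : ℕ} {U S : Matrix (Fin m) (Fin m) ℝ}

theorem isMoorePenrose_mul_mul (hU : Uᵀ * U = 1) (hU' : U * Uᵀ = 1) (hS : IsUnit S.det)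
    {K : Matrix (Fin m) (Fin k) ℝ} (hK : IsUnit (K * Kᵀ).det) :
    IsMoorePenrose (U * S * K) (Kᵀ * (K * Kᵀ)⁻¹ * S⁻¹ * Uᵀ) := by
  refine .of_mul_eq_one ?_ ?_
  · simp only [Matrix.mul_assoc]
    rw [← Matrix.mul_assoc K, mul_nonsing_inv_cancel_left _ _ hK,
      mul_nonsing_inv_cancel_left _ _ hS, hU']
  · have hsymm : ((K * Kᵀ)⁻¹)ᵀ = (K * Kᵀ)⁻¹ := by
      rw [transpose_nonsing_inv, transpose_mul, transpose_transpose]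
    simp only [Matrix.mul_assoc, ← Matrix.mul_assoc Uᵀ U, hU, Matrix.one_mul,
      nonsing_inv_mul_cancel_left _ _ hS, transpose_mul, transpose_transpose, hsymm]

theorem transpose_mul_pinv_transpose_mul_pinv_eq (hU : Uᵀ * U = 1) (hS : IsUnit S.det) {r : ℕ}
    (K : Matrix (Fin m) (Fin k) ℝ) {W : Matrix (Fin m) (Fin r) ℝ} (hW : IsUnit (W * Wᵀ).det) :
    (U * S * K)ᵀ * (Wᵀ * (W * Wᵀ)⁻¹ * S⁻¹ * Uᵀ)ᵀ * (Wᵀ * (W * Wᵀ)⁻¹ * S⁻¹ * Uᵀ) =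
      Kᵀ * (W * Wᵀ)⁻¹ * S⁻¹ * Uᵀ := by
  have hsymm : ((W * Wᵀ)⁻¹)ᵀ = (W * Wᵀ)⁻¹ := by
    rw [transpose_nonsing_inv, transpose_mul, transpose_transpose]
  have hSt : Sᵀ * S⁻¹ᵀ = 1 := by rw [← transpose_mul, nonsing_inv_mul _ hS, transpose_one]
  simp only [transpose_mul, transpose_transpose, hsymm, Matrix.mul_assoc]
  rw [← Matrix.mul_assoc Uᵀ U, hU, Matrix.one_mul, ← Matrix.mul_assoc Sᵀ, hSt, Matrix.one_mul,
    ← Matrix.mul_assoc W, nonsing_inv_mul_cancel_left _ _ hW]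

end SVD

theorem CStarRing.norm_one_le {R : Type*} [NormedRing R] [StarRing R] [CStarRing R] :
    ‖(1 : R)‖ ≤ 1 := by
  have h := CStarRing.norm_star_mul_self (x := (1 : R))
  rw [star_one, one_mul] at h
  nlinarith [norm_nonneg (1 : R)]

theorem isUnit_of_norm_one_sub_lt_one {R : Type*} [NormedRing R] [HasSummableGeomSeries R]
    {x : R} (hx : ‖1 - x‖ < 1) : IsUnit x :=
  sub_sub_cancel 1 x ▸ isUnit_one_sub_of_norm_lt_one hx

theorem norm_one_sub_le_of_mul_eq_one {R : Type*} [NormedRing R] (h1 : ‖(1 : R)‖ ≤ 1)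
    {x y : R} (hxy : x * y = 1) {ε : ℝ} (hx : ‖1 - x‖ ≤ ε) (hε : ε < 1) :
    ‖1 - y‖ ≤ ε / (1 - ε) := by
  have hy : ‖y‖ ≤ 1 + ‖1 - y‖ :=
    calc ‖y‖ = ‖1 - (1 - y)‖ := by rw [sub_sub_cancel]
    _ ≤ 1 + ‖1 - y‖ := (norm_sub_le _ _).trans (by linarith)
  have h : ‖1 - y‖ ≤ ε * (1 + ‖1 - y‖) :=
    calc ‖1 - y‖ = ‖(x - 1) * y‖ := by rw [sub_mul, hxy, one_mul]
    _ ≤ ‖1 - x‖ * ‖y‖ := (norm_mul_le _ _).trans_eq (by rw [norm_sub_rev])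
    _ ≤ ε * (1 + ‖1 - y‖) := by gcongr; exact (norm_nonneg _).trans hx
  rw [le_div_iff₀ (by linarith)]
  linarith

section EuclideanNorm

variable {m n : Type*} [Fintype m] [Fintype n] [DecidableEq n]

theorem sum_sq_mulVec_of_transpose_mul_self_eq_one {V : Matrix m n ℝ} (hV : Vᵀ * V = 1)
    (z : n → ℝ) : ∑ i, (V *ᵥ z) i ^ 2 = ∑ i, z i ^ 2 := by
  simp only [sq, ← dotProduct.eq_1]
  rw [dotProduct_mulVec, vecMul_mulVec, ← mulVec_transpose, hV, transpose_one, one_mulVec]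

theorem sqrt_sum_sq_mulVec_le (A : Matrix m n ℝ) (v : n → ℝ) :
    √(∑ i, (A *ᵥ v) i ^ 2) ≤ ‖A‖ * √(∑ i, v i ^ 2) := by
  simpa [EuclideanSpace.norm_eq] using A.l2_opNorm_mulVec (WithLp.toLp 2 v)

end EuclideanNorm

theorem underconstrained_least_squares_general {n d r : ℕ}
    (A : Matrix (Fin n) (Fin d) ℝ) (U S : Matrix (Fin n) (Fin n) ℝ)
    (V : Matrix (Fin d) (Fin n) ℝ) (M : Matrix (Fin d) (Fin r) ℝ)
    (Ap : Matrix (Fin d) (Fin n) ℝ) (ASp : Matrix (Fin r) (Fin n) ℝ)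
    (b : Fin n → ℝ) (ε : ℝ) (hε1 : ε ≤ 1 / 2)
    (hSVD : A = U * S * Vᵀ) (hU : Uᵀ * U = 1) (hU' : U * Uᵀ = 1)
    (hV : Vᵀ * V = 1) (hS : Invertible S)
    (hAp : IsMoorePenrose A Ap) (hASp : IsMoorePenrose (A * M) ASp)
    (h : ‖(1 : Matrix (Fin n) (Fin n) ℝ) - Vᵀ * M * Mᵀ * V‖ ≤ ε) :
    Real.sqrt (∑ i, (Ap.mulVec b i - (Aᵀ * ASpᵀ * ASp).mulVec b i) ^ 2) ≤
      2 * ε * Real.sqrt (∑ i, (Ap.mulVec b i) ^ 2) := by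
  set W := Vᵀ * M
  have hE : ‖1 - W * Wᵀ‖ ≤ ε := by simpa [W, Matrix.mul_assoc] using h
  have hWdet : IsUnit (W * Wᵀ).det :=
    (isUnit_iff_isUnit_det _).1 (isUnit_of_norm_one_sub_lt_one (by linarith))
  have hSdet : IsUnit S.det := isUnit_det_of_invertible S
  have hApeq : Ap = V * S⁻¹ * Uᵀ := by
    have := isMoorePenrose_mul_mul hU hU' hSdet (K := Vᵀ) (by simp [hV])
    simp only [transpose_transpose, hV, inv_one, Matrix.mul_one, ← hSVD] at this
    exact hAp.unique this
  have hASpeq : ASp = Wᵀ * (W * Wᵀ)⁻¹ * S⁻¹ * Uᵀ := by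
    refine hASp.unique ?_
    simpa [hSVD, W, Matrix.mul_assoc] using isMoorePenrose_mul_mul hU hU' hSdet hWdet
  set y := (S⁻¹ * Uᵀ) *ᵥ b
  have hdiff : Ap *ᵥ b - (Aᵀ * ASpᵀ * ASp) *ᵥ b = V *ᵥ ((1 - (W * Wᵀ)⁻¹) *ᵥ y) := by
    rw [hApeq, hASpeq, hSVD, transpose_mul_pinv_transpose_mul_pinv_eq hU hSdet _ hWdet,
      ← sub_mulVec]
    simp [y, Matrix.mul_assoc, mulVec_mulVec, Matrix.sub_mul, Matrix.mul_sub]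
  have hF : ‖1 - (W * Wᵀ)⁻¹‖ ≤ 2 * ε :=
    calc ‖1 - (W * Wᵀ)⁻¹‖ ≤ ε / (1 - ε) := norm_one_sub_le_of_mul_eq_one CStarRing.norm_one_le
          (mul_nonsing_inv _ hWdet) hE (by linarith)
    _ ≤ 2 * ε := by
          rw [div_le_iff₀ (by linarith)]
          nlinarith [(norm_nonneg _).trans hE]
  have hApb : Ap *ᵥ b = V *ᵥ y := by rw [hApeq, mulVec_mulVec, Matrix.mul_assoc]
  rw [show ∀ v w : Fin d → ℝ, ∑ i, (v i - w i) ^ 2 = ∑ i, (v - w) i ^ 2 from fun _ _ => rfl,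
    hdiff, hApb, sum_sq_mulVec_of_transpose_mul_self_eq_one hV,
    sum_sq_mulVec_of_transpose_mul_self_eq_one hV]
  exact (sqrt_sum_sq_mulVec_le _ y).trans (by gcongr)

theorem underconstrained_least_squares {n d r : ℕ} (hnd : n ≤ d)
    (A : Matrix (Fin n) (Fin d) ℝ) (U S : Matrix (Fin n) (Fin n) ℝ)
    (V : Matrix (Fin d) (Fin n) ℝ) (M : Matrix (Fin d) (Fin r) ℝ)
    (Ap : Matrix (Fin d) (Fin n) ℝ) (ASp : Matrix (Fin r) (Fin n) ℝ)
    (b : Fin n → ℝ) (ε : ℝ) (hε0 : 0 < ε) (hε1 : ε ≤ 1 / 2)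
    (hrank : A.rank = n)
    (hSVD : A = U * S * Vᵀ) (hU : Uᵀ * U = 1) (hU' : U * Uᵀ = 1)
    (hV : Vᵀ * V = 1) (hS : Invertible S)
    (hAp : IsMoorePenrose A Ap) (hASp : IsMoorePenrose (A * M) ASp)
    (h : ‖(1 : Matrix (Fin n) (Fin n) ℝ) - Vᵀ * M * Mᵀ * V‖ ≤ ε) :
    Real.sqrt (∑ i, (Ap.mulVec b i - (Aᵀ * ASpᵀ * ASp).mulVec b i) ^ 2) ≤
      2 * ε * Real.sqrt (∑ i, (Ap.mulVec b i) ^ 2) :=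
  underconstrained_least_squares_general A U S V M Ap ASp b ε hε1 hSVD hU hU' hV hS hAp hASp h
end
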